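/- Let φ₁, …, φ_m ∈ L²_loc(ℝⁿ) be linearly independent solutions of (-Δ + V₁)φ_j = 0 where V₁ ∈ L^p_loc (p = n/2, n ≥ 3) satisfies a unique continuation principle, and let V₂ ≥ 0, V₂ ≠ 0 be measurable. Then the Gram-type matrix (v_{jk}) with v_{jk} = ⟨φ_j, V₂ φ_k⟩ is positive definite, provided it is finite. -/

import Mathlib

open MeasureTheory Complex Real Filter Metric
open scoped ENNReal SchwartzMap FourierTransform ComplexOrder

noncomputable section

abbrev Euc (n : ℕ) := EuclideanSpace ℝ (Fin n)

/-- The classical Laplacian of `u`. -/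
def lap {n : ℕ} (u : Euc n → ℂ) (x : Euc n) : ℂ :=
  ∑ i, fderiv ℝ (fun y => fderiv ℝ u y (EuclideanSpace.single i 1)) x
    (EuclideanSpace.single i 1)

/-- The japanese bracket `⟨x⟩ = (1 + |x|²)^{1/2}`. -/
def jap {n : ℕ} (x : Euc n) : ℝ := Real.sqrt (1 + ‖x‖ ^ 2)

/-- `V` is relatively `Δ`-compact (sequential form). -/
def DeltaCompact {n : ℕ} (V : Euc n → ℂ) : Prop :=
  ∀ u : ℕ → Euc n → ℂ, (∀ k, ContDiff ℝ 2 (u k)) →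
    (∃ C : ℝ≥0∞, C ≠ ⊤ ∧ ∀ k, eLpNorm (u k) 2 volume ≤ C ∧
      eLpNorm (lap (u k)) 2 volume ≤ C) →
    ∃ (φ : ℕ → ℕ) (g : Euc n → ℂ), StrictMono φ ∧
      Tendsto (fun k => eLpNorm (fun x => V x * u (φ k) x - g x) 2 volume) atTop (nhds 0)

/-! The quadratic form of the matrix at `d` is `∫ V₂ |ψ|²` with `ψ = ∑ d_j φ_j`. It is nonnegative,
and if it vanishes then `ψ = 0` a.e. on `{V₂ ≠ 0}`, a set of positive measure. Since `ψ` solves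
the same equation as the `φ_j`, unique continuation forces `ψ ≡ 0`, and linear independence
gives `d = 0`. -/

open ComplexConjugate Matrix

lemma fderiv_linearCombination_apply {E ι : Type*} [NormedAddCommGroup E] [NormedSpace ℝ E]
    (s : Finset ι) (c : ι → ℂ) {f : ι → E → ℂ} {x : E}
    (hf : ∀ j ∈ s, DifferentiableAt ℝ (f j) x) (v : E) :
    fderiv ℝ (fun y => ∑ j ∈ s, c j * f j y) x v = ∑ j ∈ s, c j * fderiv ℝ (f j) x v := by
  rw [(HasFDerivAt.fun_sum fun j hj => (hf j hj).hasFDerivAt.const_mul (c j)).fderiv]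
  simp

lemma lap_linearCombination {n : ℕ} {ι : Type*} [Fintype ι] (c : ι → ℂ) {f : ι → Euc n → ℂ}
    (hf : ∀ j, ContDiff ℝ 2 (f j)) (x : Euc n) :
    lap (fun y => ∑ j, c j * f j y) x = ∑ j, c j * lap (f j) x := by
  have hdiff : ∀ j, Differentiable ℝ (f j) := fun j => (hf j).differentiable (by norm_num)
  have hdiff' : ∀ j v, Differentiable ℝ (fun y => fderiv ℝ (f j) y v) := fun j v =>
    ((hf j).fderiv_right (m := 1) (by norm_num)).differentiable (by norm_num) |>.clm_apply
      (differentiable_const v)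
  simp only [lap, fderiv_linearCombination_apply _ c (fun j _ => hdiff j _),
    fderiv_linearCombination_apply _ c (fun j _ => hdiff' j _ _), Finset.mul_sum]
  exact Finset.sum_comm

variable {α ι : Type*} [MeasurableSpace α]

def weightedGram (μ : Measure α) (V : α → ℝ) (φ : ι → α → ℂ) : Matrix ι ι ℂ :=
  Matrix.of fun j k => ∫ x, conj (φ j x) * (V x : ℂ) * φ k x ∂μ

lemma weightedGram_isHermitian (μ : Measure α) (V : α → ℝ) (φ : ι → α → ℂ) :
    (weightedGram μ V φ).IsHermitian := by
  ext j k
  simp only [weightedGram, Matrix.conjTranspose_apply, Matrix.of_apply, RCLike.star_def,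
    ← integral_conj, map_mul, conj_conj, conj_ofReal]
  congr 1 with x
  ring

lemma conj_sum_mul_ofReal_mul_sum [Fintype ι] (d : ι → ℂ) (z : ι → ℂ) (r : ℝ) :
    conj (∑ j, d j * z j) * (r : ℂ) * ∑ k, d k * z k
      = ∑ j, ∑ k, conj (d j) * d k * (conj (z j) * r * z k) := by
  simp only [map_sum, map_mul, Finset.sum_mul, Finset.mul_sum]
  rw [Finset.sum_comm]
  exact Finset.sum_congr rfl fun j _ => Finset.sum_congr rfl fun k _ => by ring

lemma conj_mul_ofReal_mul_self (z : ℂ) (r : ℝ) :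
    conj z * (r : ℂ) * z = ((r * normSq z : ℝ) : ℂ) := by
  rw [mul_comm (conj z), mul_assoc, mul_comm (conj z), mul_conj]
  push_cast
  ring

lemma star_dotProduct_weightedGram_mulVec [Fintype ι] {μ : Measure α} {V : α → ℝ}
    {φ : ι → α → ℂ} (hfin : ∀ j k, Integrable (fun x => conj (φ j x) * (V x : ℂ) * φ k x) μ)
    (d : ι → ℂ) :
    Integrable (fun x => conj (∑ j, d j * φ j x) * (V x : ℂ) * ∑ j, d j * φ j x) μ ∧
      star d ⬝ᵥ weightedGram μ V φ *ᵥ d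
        = ∫ x, conj (∑ j, d j * φ j x) * (V x : ℂ) * ∑ j, d j * φ j x ∂μ := by
  have hint : ∀ j, Integrable
      (fun x => ∑ k, conj (d j) * d k * (conj (φ j x) * (V x : ℂ) * φ k x)) μ :=
    fun j => integrable_finsetSum _ fun k _ => (hfin j k).const_mul _
  simp only [conj_sum_mul_ofReal_mul_sum]
  refine ⟨integrable_finsetSum _ fun j _ => hint j, ?_⟩
  rw [integral_finsetSum _ fun j _ => hint j]
  simp only [dotProduct, Matrix.mulVec, weightedGram, Matrix.of_apply, Pi.star_apply,
    RCLike.star_def, Finset.mul_sum, integral_finsetSum _ fun k _ => (hfin _ k).const_mul _,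
    integral_const_mul]
  exact Finset.sum_congr rfl fun j _ => Finset.sum_congr rfl fun k _ => by ring

lemma weightedGram_posDef [Fintype ι] {μ : Measure α} {V : α → ℝ} {φ : ι → α → ℂ}
    (hV : ∀ x, 0 ≤ V x)
    (hfin : ∀ j k, Integrable (fun x => conj (φ j x) * (V x : ℂ) * φ k x) μ)
    (hind : ∀ d : ι → ℂ, (∀ᵐ x ∂μ, V x ≠ 0 → ∑ j, d j * φ j x = 0) → d = 0) :
    (weightedGram μ V φ).PosDef := by
  refine Matrix.posDef_iff_dotProduct_mulVec.mpr ⟨weightedGram_isHermitian μ V φ, fun d hd => ?_⟩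
  set ψ : α → ℂ := fun x => ∑ j, d j * φ j x
  obtain ⟨hint, hquad⟩ := star_dotProduct_weightedGram_mulVec hfin d
  simp only [conj_mul_ofReal_mul_self] at hint hquad
  have hnonneg : 0 ≤ fun x => V x * normSq (ψ x) := fun x => mul_nonneg (hV x) (normSq_nonneg _)
  rw [hquad, integral_complex_ofReal, zero_lt_real]
  refine (integral_nonneg hnonneg).lt_of_ne fun hzero => hd (hind d ?_)
  have hint' : Integrable (fun x => V x * normSq (ψ x)) μ := by simpa using hint.re
  filter_upwards [(integral_eq_zero_iff_of_nonneg hnonneg hint').mp hzero.symm] with x hx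
  exact fun hVx => normSq_eq_zero.mp ((mul_eq_zero.mp hx).resolve_left hVx)

lemma measure_setOf_pos_of_ae_ne_zero_imp {μ : Measure α} {V : α → ℝ} {p : α → Prop}
    (hV : ¬ ∀ᵐ x ∂μ, V x = 0) (hp : ∀ᵐ x ∂μ, V x ≠ 0 → p x) : 0 < μ {x | p x} :=
  (pos_iff_ne_zero.mpr fun h => hV (ae_iff.mpr h)).trans_le (measure_mono_ae hp)

theorem stmt9_general (n : ℕ) (m : ℕ) (V₁ V₂ : Euc n → ℝ)
    (hUCP : ∀ ψ : Euc n → ℂ, ContDiff ℝ 2 ψ → (∀ x, lap ψ x = (V₁ x : ℂ) * ψ x) →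
      0 < volume {x | ψ x = 0} → ∀ x, ψ x = 0)
    (hV₂pos : ∀ x, 0 ≤ V₂ x)
    (hV₂ne : ¬ (∀ᵐ x ∂(volume : Measure (Euc n)), V₂ x = 0))
    (φ : Fin m → Euc n → ℂ) (hφreg : ∀ j, ContDiff ℝ 2 (φ j))
    (hφeq : ∀ j, ∀ x, lap (φ j) x = (V₁ x : ℂ) * φ j x)
    (hφind : LinearIndependent ℂ φ)
    (hfin : ∀ j k, Integrable (fun x => (starRingEnd ℂ) (φ j x) * (V₂ x : ℂ) * φ k x) volume) :
    Matrix.PosDef (Matrix.of fun j k : Fin m =>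
      ∫ x, (starRingEnd ℂ) (φ j x) * (V₂ x : ℂ) * φ k x) := by
  refine weightedGram_posDef hV₂pos hfin fun d hd => ?_
  set ψ : Euc n → ℂ := fun x => ∑ j, d j * φ j x
  have hψreg : ContDiff ℝ 2 ψ := ContDiff.sum fun j _ => contDiff_const.mul (hφreg j)
  have hψeq : ∀ x, lap ψ x = V₁ x * ψ x := fun x => by
    simp only [ψ, lap_linearCombination d hφreg, hφeq, Finset.mul_sum, mul_left_comm]
  have hψ : ∀ x, ψ x = 0 := hUCP ψ hψreg hψeq (measure_setOf_pos_of_ae_ne_zero_imp hV₂ne hd)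
  funext j
  refine Fintype.linearIndependent_iff.mp hφind d (funext fun x => ?_) j
  simpa using hψ x

/-- The Gram-type matrix `v_{jk} = ⟨φ_j, V₂ φ_k⟩` of linearly independent solutions of
`(-Δ + V₁)φ = 0` is positive definite when `V₂ ≥ 0`, `V₂ ≠ 0`, assuming unique
continuation for `-Δ + V₁` and finiteness of the entries. -/
theorem stmt9 (n : ℕ) (hn : 3 ≤ n) (m : ℕ) (V₁ V₂ : Euc n → ℝ)
    (hV₁loc : ∀ K : Set (Euc n), IsCompact K →
      MemLp V₁ (ENNReal.ofReal ((n : ℝ) / 2)) (volume.restrict K))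
    (hUCP : ∀ ψ : Euc n → ℂ, ContDiff ℝ 2 ψ → (∀ x, lap ψ x = (V₁ x : ℂ) * ψ x) →
      0 < volume {x | ψ x = 0} → ∀ x, ψ x = 0)
    (hV₂meas : Measurable V₂) (hV₂pos : ∀ x, 0 ≤ V₂ x)
    (hV₂ne : ¬ (∀ᵐ x ∂(volume : Measure (Euc n)), V₂ x = 0))
    (φ : Fin m → Euc n → ℂ) (hφreg : ∀ j, ContDiff ℝ 2 (φ j))
    (hφloc : ∀ j, ∀ K : Set (Euc n), IsCompact K → MemLp (φ j) 2 (volume.restrict K))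
    (hφeq : ∀ j, ∀ x, lap (φ j) x = (V₁ x : ℂ) * φ j x)
    (hφind : LinearIndependent ℂ φ)
    (hfin : ∀ j k, Integrable (fun x => (starRingEnd ℂ) (φ j x) * (V₂ x : ℂ) * φ k x) volume) :
    Matrix.PosDef (Matrix.of fun j k : Fin m =>
      ∫ x, (starRingEnd ℂ) (φ j x) * (V₂ x : ℂ) * φ k x) :=
  stmt9_general n m V₁ V₂ hUCP hV₂pos hV₂ne φ hφreg hφeq hφind hfin
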